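/- arXiv:2507.20889 — 4 statements merged into one kernel-verified Lean document; each statement's English description precedes it below -/
import Mathlib

section
/- Let f, v₁, v₂ ∈ K[x] with f ≠ 0, and suppose 1 is a greatest common divisor of f, v₁, v₂ (equivalently, no nonconstant polynomial divides all three). Then there exists h ∈ K[x] such that f and v₁ + h·v₂ are coprime, i.e. gcd(f, v₁ + h·v₂) = 1. -/
/-!
Take for `h` the product of the prime factors of `f` that do not divide `v₁`. A prime factor
of `f` that divides `v₁` divides neither `h` nor (by the gcd hypothesis) `v₂`, so it does not
divide `v₁ + h * v₂`; one that does not divide `v₁` divides `h`, so again it does not divide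
`v₁ + h * v₂`. In the principal ideal domain `K[X]`, having no common prime factor is
coprimality.
-/

namespace UniqueFactorizationMonoid

theorem exists_forall_prime_dvd_iff_not_dvd {α : Type*} [CommMonoidWithZero α]
    [UniqueFactorizationMonoid α] {a : α} (ha : a ≠ 0) (b : α) :
    ∃ h : α, ∀ p : α, Prime p → p ∣ a → (p ∣ h ↔ ¬p ∣ b) := by
  classical
  refine ⟨((factors a).filter (¬· ∣ b)).prod, fun p hp hpa =>
    ⟨fun hph hpb => ?_, fun hpb => ?_⟩⟩
  · obtain ⟨q, hq, hpq⟩ := hp.exists_mem_multiset_dvd hph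
    rw [Multiset.mem_filter] at hq
    have hpq : Associated p q := hp.associated_of_dvd (prime_of_factor q hq.1) hpq
    exact hq.2 (hpq.symm.dvd.trans hpb)
  · obtain ⟨q, hq, hpq⟩ := exists_mem_factors_of_dvd ha hp.irreducible hpa
    have hqb : ¬q ∣ b := fun hqb => hpb (hpq.dvd.trans hqb)
    exact hpq.dvd.trans (Multiset.dvd_prod (Multiset.mem_filter.mpr ⟨hq, hqb⟩))

theorem exists_forall_prime_dvd_not_dvd_add_mul {α : Type*} [CommRing α]
    [UniqueFactorizationMonoid α] {a b c : α} (ha : a ≠ 0)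
    (habc : ∀ p : α, Prime p → p ∣ a → p ∣ b → ¬p ∣ c) :
    ∃ h : α, ∀ p : α, Prime p → p ∣ a → ¬p ∣ b + h * c := by
  obtain ⟨h, hh⟩ := exists_forall_prime_dvd_iff_not_dvd ha b
  refine ⟨h, fun p hp hpa hpsum => ?_⟩
  by_cases hpb : p ∣ b
  · rcases hp.dvd_or_dvd ((dvd_add_right hpb).mp hpsum) with hph | hpc
    · exact (hh p hp hpa).mp hph hpb
    · exact habc p hp hpa hpb hpc
  · have hphc : p ∣ h * c := ((hh p hp hpa).mpr hpb).mul_right c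
    exact hpb ((dvd_add_left hphc).mp hpsum)

end UniqueFactorizationMonoid

/-- Let `f, v₁, v₂ ∈ K[x]` with `f ≠ 0` and suppose `1` is a greatest
common divisor of `f, v₁, v₂` (every common divisor of the three is a unit). Then there
exists `h ∈ K[x]` such that `gcd(f, v₁ + h·v₂) = 1`, i.e. `f` and `v₁ + h·v₂` are
coprime. -/
theorem exists_coprime_combination {K : Type*} [Field K]
    (f v₁ v₂ : Polynomial K) (hf : f ≠ 0)
    (hgcd : ∀ c : Polynomial K, c ∣ f → c ∣ v₁ → c ∣ v₂ → IsUnit c) :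
    ∃ h : Polynomial K, IsCoprime f (v₁ + h * v₂) := by
  obtain ⟨h, hh⟩ := UniqueFactorizationMonoid.exists_forall_prime_dvd_not_dvd_add_mul hf
    fun p hp hpf hpv₁ hpv₂ => hp.not_isUnit (hgcd p hpf hpv₁ hpv₂)
  exact ⟨h, isCoprime_of_prime_dvd (fun hzero => hf hzero.1) hh⟩
end

section
/- Let l ≥ 2 and let W be the l×l matrix over R = K[x,y] whose (i,i) entry is f_i for 1 ≤ i ≤ l−1, whose (i,l) entry is v_i·(py+q) for 1 ≤ i ≤ l, and all of whose other entries are 0, where f₁, f₂, …, f_{l−1} ∈ K[x] are nonzero with f₁ ∣ f₂ ∣ ⋯ ∣ f_{l−1}, and p, q, v₁, …, v_l ∈ K[x]. If I_1(W) = R, then the ideal of R generated by f₁ and py+q equals R, and 1 is a greatest common divisor of f₁, v₁, …, v_l in K[x]. -/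
/-! Since `f₁` divides every diagonal entry, any ideal containing `f₁` and all `vᵢ·(py+q)`
contains every entry of `W`, hence is the unit ideal. Apply this to `⟨f₁, py+q⟩` and, for a
common divisor `c` of `f₁, v₁, …, v_l`, to `⟨c⟩`. -/

open Polynomial Matrix

theorem mem_ideal_of_diag_and_last_col_mem {R : Type*} [CommRing R] {l : ℕ}
    (f v : Fin l → R) (p q a : R) (hdvd : ∀ i : Fin l, (i : ℕ) < l - 1 → a ∣ f i)
    {J : Ideal R[X]} (ha : C a ∈ J) (hv : ∀ i : Fin l, C (v i) * (C p * X + C q) ∈ J)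
    (i j : Fin l) :
    (if (j : ℕ) = l - 1 then C (v i) * (C p * X + C q)
      else if i = j then C (f i) else 0) ∈ J := by
  split_ifs with hlast hdiag
  · exact hv i
  · subst hdiag
    obtain ⟨k, hk⟩ := hdvd i (by omega)
    rw [hk, C_mul]
    exact J.mul_mem_right _ ha
  · exact J.zero_mem

/-- Let `l ≥ 2` and let `W ∈ K[x,y]^{l×l}` have `(i,i)` entry `fᵢ`
(for `i` among the first `l-1` indices), `(i, l)` entry `vᵢ·(p·y+q)`, and all other
entries `0`, where the `fᵢ ∈ K[x]` are nonzero with `f₁ ∣ f₂ ∣ ⋯ ∣ f_{l-1}` and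
`p, q, v₁, …, v_l ∈ K[x]`. If the entries of `W` generate the unit ideal
(`I₁(W) = K[x,y]`), then `⟨f₁, p·y+q⟩ = K[x,y]` and `1` is a greatest common divisor
of `f₁, v₁, …, v_l` in `K[x]`. -/
theorem entries_unit_ideal_consequences {K : Type*} [Field K] {l : ℕ} (hl : 2 ≤ l)
    (f v : Fin l → Polynomial K) (p q : Polynomial K)
    (hchain : ∀ i j : Fin l, (i : ℕ) ≤ (j : ℕ) → (j : ℕ) < l - 1 → f i ∣ f j)
    (W : Matrix (Fin l) (Fin l) (Polynomial (Polynomial K)))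
    (hW : W = Matrix.of fun i j : Fin l =>
      if (j : ℕ) = l - 1 then C (v i) * (C p * X + C q)
      else if i = j then C (f i) else 0)
    (hI : Ideal.span {a : Polynomial (Polynomial K) | ∃ i j : Fin l, W i j = a} = ⊤) :
    Ideal.span {(C (f ⟨0, by omega⟩) : Polynomial (Polynomial K)), C p * X + C q} = ⊤ ∧
    ∀ c : Polynomial K, c ∣ f ⟨0, by omega⟩ → (∀ i : Fin l, c ∣ v i) → IsUnit c := by
  have eq_top_of_contains : ∀ J : Ideal (Polynomial (Polynomial K)), C (f ⟨0, by omega⟩) ∈ J →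
      (∀ i : Fin l, C (v i) * (C p * X + C q) ∈ J) → J = ⊤ := by
    intro J hf₀ hv
    rw [eq_top_iff, ← hI, Ideal.span_le]
    rintro _ ⟨i, j, rfl⟩
    rw [hW, of_apply]
    exact mem_ideal_of_diag_and_last_col_mem f v p q _
      (fun i hi => hchain _ i (Nat.zero_le _) hi) hf₀ hv i j
  refine ⟨eq_top_of_contains _ (Ideal.subset_span (by simp))
    fun i => Ideal.mul_mem_left _ _ (Ideal.subset_span (by simp)), fun c hc hv => ?_⟩
  have hc_top : Ideal.span {C c} = ⊤ :=
    eq_top_of_contains _ (Ideal.mem_span_singleton.2 (_root_.map_dvd C hc))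
      fun i => Ideal.mem_span_singleton.2 ((_root_.map_dvd C (hv i)).mul_right _)
  rwa [Ideal.span_singleton_eq_top, isUnit_C] at hc_top
end

section
/- Let s ≥ 2 be an integer and let M be the 2×2 matrix over ℚ[x,y] given by M = [[−1+x−y+y², y], [0, 1+x−y^{s−2}]]. Then there do not exist unimodular matrices U, V ∈ GL₂(ℚ[x,y]) such that U M V = diag(1, (−1+x−y+y²)(1+x−y^{s−2})); that is, M is not equivalent over ℚ[x,y] to its Smith normal form diag(1, det(M)). -/
/-!
Only the `(0, 0)` entry of `U * M * V = diag(1, a * b)` is needed, where `a = -1 + x - y + y²`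
and `b = 1 + x - y^(s-2)`: it reads `u₀₀ (a v₀₀ + y v₁₀) + u₀₁ b v₁₀ = 1`. On the curve `a = 0`,
the graph of `x = 1 + y - y²`, it makes `u₀₀ y + u₀₁ b` a unit of `ℚ[y]`, i.e. a nonzero
constant `c₁`; on the curve `b = 0`, the graph of `x = y^(s-2) - 1`, it makes `u₀₀` a nonzero
constant `c₂`. At a complex intersection point `(x, θ)` of the two curves `b` vanishes, so
`θ = c₁ / c₂` is rational. But `θ` is a root of `2 + y - y² - y^(s-2)`, which has no rational
root.
-/

open Polynomial Matrix

/-- The variable `x` of `ℚ[x,y] = (ℚ[x])[y]` (the inner variable). -/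
noncomputable def xQ : Polynomial (Polynomial ℚ) := Polynomial.C Polynomial.X

/-- The variable `y` of `ℚ[x,y] = (ℚ[x])[y]` (the outer variable). -/
noncomputable def yQ : Polynomial (Polynomial ℚ) := Polynomial.X

section Bivariate

open Polynomial.Bivariate

theorem AlgHom.map_aevalAeval {R A B : Type*} [CommSemiring R] [CommSemiring A] [Algebra R A]
    [CommSemiring B] [Algebra R B] (φ : A →ₐ[R] B) (x y : A) (f : R[X][Y]) :
    φ (aevalAeval x y f) = aevalAeval (φ x) (φ y) f := by
  have : φ.comp (aevalAeval x y) = aevalAeval (φ x) (φ y) :=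
    (aevalAevalEquiv R B).symm.injective (by simp)
  exact AlgHom.congr_fun this f

theorem exists_aevalAeval_eq_algebraMap_of_isUnit {R A : Type*} [CommRing R] [NoZeroDivisors R]
    [CommRing A] [Algebra R A] {p : R[X]} {f : R[X][Y]} (hf : IsUnit (aevalAeval p X f)) (θ : A) :
    ∃ c : R, IsUnit c ∧ aevalAeval (aeval θ p) θ f = algebraMap R A c := by
  obtain ⟨c, hc, hcf⟩ := Polynomial.isUnit_iff.1 hf
  refine ⟨c, hc, ?_⟩
  rw [← aeval_C θ c, hcf, AlgHom.map_aevalAeval, aeval_X]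

theorem mul_upperTriangular_mul_apply_zero_zero {R : Type*} [CommRing R]
    (U V : Matrix (Fin 2) (Fin 2) R) (a c d : R) :
    (U * !![a, c; 0, d] * V) 0 0 = U 0 0 * (a * V 0 0 + c * V 1 0) + U 0 1 * d * V 1 0 := by
  simp [Matrix.mul_apply, Fin.sum_univ_two]
  ring

theorem mem_range_algebraMap_of_mul_mul_apply_eq_one {K A : Type*} [Field K] [CommRing A]
    [Algebra K A] {a b : K[X][Y]} {p q : K[X]} (ha : aevalAeval p X a = 0)
    (hb : aevalAeval q X b = 0) {U V : Matrix (Fin 2) (Fin 2) K[X][Y]}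
    (h : (U * !![a, Y; 0, b] * V) 0 0 = 1) {θ : A} (hθ : aeval θ p = aeval θ q) :
    θ ∈ Set.range (algebraMap K A) := by
  rw [mul_upperTriangular_mul_apply_zero_zero] at h
  have hunit_a : IsUnit (aevalAeval p X (U 0 0 * Y + U 0 1 * b)) := by
    refine IsUnit.of_mul_eq_one (aevalAeval p X (V 1 0)) ?_
    rw [← map_mul, show (U 0 0 * Y + U 0 1 * b) * V 1 0 = 1 - U 0 0 * V 0 0 * a by
      linear_combination h]
    rw [map_sub, map_one, map_mul, ha, mul_zero, sub_zero]
  have hunit_b : IsUnit (aevalAeval q X (U 0 0)) := by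
    refine IsUnit.of_mul_eq_one (aevalAeval q X (a * V 0 0 + Y * V 1 0)) ?_
    rw [← map_mul, show U 0 0 * (a * V 0 0 + Y * V 1 0) = 1 - U 0 1 * V 1 0 * b by
      linear_combination h]
    rw [map_sub, map_one, map_mul, hb, mul_zero, sub_zero]
  obtain ⟨c₁, -, hc₁⟩ := exists_aevalAeval_eq_algebraMap_of_isUnit hunit_a θ
  obtain ⟨c₂, hc₂, hU₀₀⟩ := exists_aevalAeval_eq_algebraMap_of_isUnit hunit_b θ
  have hb' : aevalAeval (aeval θ q) θ b = 0 := by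
    simpa [hb] using (AlgHom.map_aevalAeval (aeval θ) q X b).symm
  rw [hθ] at hc₁
  simp only [map_add, map_mul, aevalAeval_Y, hb', mul_zero, add_zero, hU₀₀] at hc₁
  refine ⟨c₂⁻¹ * c₁, ?_⟩
  rw [map_mul, ← hc₁, ← mul_assoc, ← map_mul, inv_mul_cancel₀ hc₂.ne_zero, map_one, one_mul]

end Bivariate

theorem quadratic_ne_zero_of_not_isSquare_discrim {R : Type*} [CommRing R] {a b c : R}
    (h : ¬IsSquare (discrim a b c)) (x : R) : a * (x * x) + b * x + c ≠ 0 :=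
  fun hx ↦ h ⟨_, (discrim_eq_sq_of_quadratic_eq_zero hx).trans (sq _)⟩

theorem exists_complex_root_two_add_sub_sq_sub_pow (n : ℕ) :
    ∃ θ : ℂ, 2 + θ - θ ^ 2 - θ ^ n = 0 := by
  have hdeg : (2 + X - X ^ 2 - X ^ n : ℚ[X]).degree ≠ 0 := by
    intro h
    -- A constant polynomial cannot take the values `2 - 0 ^ n ≥ 1` at `0` and `-2 ^ n < 0` at `2`.
    have hconst := congrArg (fun P ↦ eval 0 P - eval 2 P) (eq_C_of_degree_eq_zero h)
    simp only [eval_sub, eval_add, eval_pow, eval_X, eval_ofNat, eval_C, sub_self] at hconst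
    have h_zero_pow : (0 : ℚ) ^ n ≤ 1 := pow_le_one₀ le_rfl zero_le_one
    have h_two_pow : (0 : ℚ) < 2 ^ n := by positivity
    linarith
  obtain ⟨θ, hθ⟩ := IsAlgClosed.exists_aeval_eq_zero ℂ _ hdeg
  exact ⟨θ, by simpa [map_ofNat] using hθ⟩

theorem two_add_sub_sq_sub_pow_ne_zero (n : ℕ) (q : ℚ) : 2 + q - q ^ 2 - q ^ n ≠ 0 := by
  intro h
  obtain hn | hn := le_or_gt n 2
  · interval_cases n
    · exact quadratic_ne_zero_of_not_isSquare_discrim (a := -1) (b := 1) (c := 1)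
        (by norm_num [discrim]) q (by linear_combination h)
    · exact quadratic_ne_zero_of_not_isSquare_discrim (a := -1) (b := 0) (c := 2)
        (by norm_num [discrim]) q (by linear_combination h)
    · exact quadratic_ne_zero_of_not_isSquare_discrim (a := -2) (b := 1) (c := 2)
        (by norm_num [discrim]) q (by linear_combination h)
  obtain ⟨m, rfl⟩ : ∃ m, n = m + 3 := ⟨n - 3, by omega⟩
  have hroot : aeval q (X ^ (m + 3) + (X ^ 2 - X - 2) : ℤ[X]) = 0 := by
    simp only [map_add, map_pow, aeval_X, aeval_sub, map_ofNat]
    linear_combination -h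
  have hmonic : (X ^ (m + 3) + (X ^ 2 - X - 2) : ℤ[X]).Monic :=
    monic_X_pow_add (by compute_degree!)
  obtain ⟨k, rfl, hk⟩ := exists_integer_of_is_root_of_monic hmonic hroot
  have hk2 : k ∣ 2 := by simpa using hk
  have hk_le : k ≤ 2 := Int.le_of_dvd two_pos hk2
  have hk_ge : -2 ≤ k := by linarith [Int.le_of_dvd two_pos (neg_dvd.2 hk2)]
  have hk_root : (2 + k - k ^ 2 - k ^ (m + 3) : ℤ) = 0 := by
    rw [eq_intCast] at h
    exact_mod_cast h
  -- Only `k = -2` is left, where the equation reads `-4 + 8 * (-2) ^ m = 0`.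
  interval_cases k <;> simp [pow_succ] at hk_root
  omega

theorem not_equiv_smithNormalForm_general (s : ℕ) :
    ¬ ∃ U V : Matrix (Fin 2) (Fin 2) (Polynomial (Polynomial ℚ)),
      IsUnit U.det ∧ IsUnit V.det ∧
      U * !![-1 + xQ - yQ + yQ ^ 2, yQ; 0, 1 + xQ - yQ ^ (s - 2)] * V =
        !![1, 0; 0, (-1 + xQ - yQ + yQ ^ 2) * (1 + xQ - yQ ^ (s - 2))] := by
  rintro ⟨U, V, -, -, hUMV⟩
  obtain ⟨θ, hθ⟩ := exists_complex_root_two_add_sub_sq_sub_pow (s - 2)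
  have hmeet : aeval θ (1 + X - X ^ 2 : ℚ[X]) = aeval θ (X ^ (s - 2) - 1 : ℚ[X]) := by
    simp only [map_add, map_sub, map_one, map_pow, aeval_X]
    linear_combination hθ
  have h00 : (U * !![-1 + xQ - yQ + yQ ^ 2, yQ; 0, 1 + xQ - yQ ^ (s - 2)] * V) 0 0 = 1 := by
    rw [hUMV]; rfl
  obtain ⟨q, rfl⟩ := mem_range_algebraMap_of_mul_mul_apply_eq_one
    (by simp [xQ, yQ]; ring) (by simp [xQ, yQ]) h00 hmeet
  simp only [eq_ratCast] at hθ
  exact two_add_sub_sq_sub_pow_ne_zero (s - 2) q (by exact_mod_cast hθ)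

/-- For every integer `s ≥ 2`, the matrix
`M = [[-1+x-y+y², y], [0, 1+x-y^{s-2}]]` over `ℚ[x,y]` is not equivalent to its Smith
normal form `diag(1, (-1+x-y+y²)(1+x-y^{s-2}))`: there are no unimodular `U, V` with
`U M V` equal to that diagonal matrix. -/
theorem not_equiv_smithNormalForm (s : ℕ) (hs : 2 ≤ s) :
    ¬ ∃ U V : Matrix (Fin 2) (Fin 2) (Polynomial (Polynomial ℚ)),
      IsUnit U.det ∧ IsUnit V.det ∧
      U * !![-1 + xQ - yQ + yQ ^ 2, yQ; 0, 1 + xQ - yQ ^ (s - 2)] * V =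
        !![1, 0; 0, (-1 + xQ - yQ + yQ ^ 2) * (1 + xQ - yQ ^ (s - 2))] :=
  not_equiv_smithNormalForm_general s
end

section
/- Let s ≥ 2 be an integer and let A = [[1+y−y², −y], [0, −1+y^{s−2}]] and A₁ = [[1+y−y², −1], [0, −1+y^{s−2}]] be 2×2 matrices over ℚ[y]. Then A and A₁ are not similar over ℚ[y]: there is no unimodular matrix Q ∈ GL₂(ℚ[y]) with Q⁻¹ A Q = A₁ (equivalently, no Q with det(Q) a unit of ℚ[y] such that A Q = Q A₁). -/
/-!
Comparing the `(0,0)` entries of `A Q = Q A₁` gives `y · Q₁₀ = 0`, so `Q` is upper triangular and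
its diagonal entries are nonzero constants `u, v`. The `(0,1)` entries then give
`Q₀₁ · (a - d) = v y - u`, where `a - d = 2 + y - y² - y^{s-2}` is the difference of the diagonal
entries. The right side is a nonzero polynomial of degree at most `1`, while `a - d` has degree at
least `2`.
-/

open Polynomial Matrix

theorem Matrix.intertwine_upperTriangular_fin_two {R : Type*} [CommRing R] {a b b' d : R}
    {Q : Matrix (Fin 2) (Fin 2) R} (h : !![a, b; 0, d] * Q = Q * !![a, b'; 0, d]) :
    b * Q 1 0 = 0 ∧ Q 0 1 * (a - d) = Q 0 0 * b' - b * Q 1 1 := by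
  have h00 := congrFun (congrFun h 0) 0
  have h01 := congrFun (congrFun h 0) 1
  simp only [mul_apply, Fin.sum_univ_two, of_apply, cons_val', cons_val_zero, cons_val_one,
    empty_val', cons_val_fin_one] at h00 h01
  exact ⟨by linear_combination h00, by linear_combination h01⟩

/-- The second derivative at `1` is `-2 - n (n - 1) ≠ 0`, so the degree cannot be below `2`. -/
theorem Polynomial.two_le_natDegree_two_add_X_sub_X_sq_sub_X_pow {R : Type*} [CommRing R]
    [CharZero R] (n : ℕ) : 2 ≤ (2 + X - X ^ 2 - X ^ n : R[X]).natDegree := by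
  by_contra! h
  have h2 : eval 1 (derivative^[2] (2 + X - X ^ 2 - X ^ n : R[X])) =
      -((2 + n * (n - 1) : ℕ) : R) := by
    simp [Function.iterate_succ, derivative_X_pow]
    ring
  rw [iterate_derivative_eq_zero h, eval_zero, eq_comm, neg_eq_zero, Nat.cast_eq_zero] at h2
  omega

theorem not_similar_over_Qy_general (s : ℕ) :
    ¬ ∃ Q : Matrix (Fin 2) (Fin 2) (Polynomial ℚ),
      IsUnit Q.det ∧
      !![1 + X - X ^ 2, -X; 0, -1 + X ^ (s - 2)] * Q =
        Q * !![1 + X - X ^ 2, -1; 0, -1 + X ^ (s - 2)] := by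
  rintro ⟨Q, hdet, hQ⟩
  obtain ⟨hXQ10, hQ01⟩ := intertwine_upperTriangular_fin_two hQ
  have hQ10 : Q 1 0 = 0 := by simpa [X_ne_zero] using hXQ10
  have hdiag : IsUnit (Q 0 0 * Q 1 1) := by simpa [det_fin_two, hQ10] using hdet
  obtain ⟨u, -, hu⟩ := isUnit_iff.mp (isUnit_of_mul_isUnit_left hdiag)
  obtain ⟨v, hv, hv'⟩ := isUnit_iff.mp (isUnit_of_mul_isUnit_right hdiag)
  have hlin : Q 0 1 * (1 + X - X ^ 2 - (-1 + X ^ (s - 2))) = C v * X + C (-u) := by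
    rw [hQ01, ← hu, ← hv', C_neg]; ring
  have hlin_ne : C v * X + C (-u) ≠ 0 := fun h => by
    simpa [hv.ne_zero] using congrArg (coeff · 1) h
  have hdeg := (natDegree_le_of_dvd (Dvd.intro_left _ hlin) hlin_ne).trans natDegree_linear_le
  have hdiff := two_le_natDegree_two_add_X_sub_X_sq_sub_X_pow (R := ℚ) (s - 2)
  rw [show (2 + X - X ^ 2 - X ^ (s - 2) : ℚ[X]) = 1 + X - X ^ 2 - (-1 + X ^ (s - 2)) by ring] at hdiff
  omega

/-- For every integer `s ≥ 2`, the matrices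
`A = [[1+y-y², -y], [0, -1+y^{s-2}]]` and `A₁ = [[1+y-y², -1], [0, -1+y^{s-2}]]`
over `ℚ[y]` are not similar over `ℚ[y]`: there is no `Q` with `det Q` a unit of `ℚ[y]`
such that `A Q = Q A₁`. -/
theorem not_similar_over_Qy (s : ℕ) (hs : 2 ≤ s) :
    ¬ ∃ Q : Matrix (Fin 2) (Fin 2) (Polynomial ℚ),
      IsUnit Q.det ∧
      !![1 + X - X ^ 2, -X; 0, -1 + X ^ (s - 2)] * Q =
        Q * !![1 + X - X ^ 2, -1; 0, -1 + X ^ (s - 2)] :=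
  not_similar_over_Qy_general s
end
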